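/- arXiv:1301.2193 — 3 statements merged into one kernel-verified Lean document; each statement's English description precedes it below -/
import Mathlib

section
/- Let f be a transcendental entire function. If f is log-regular, then f is weakly regular. -/
open Set Filter

/-- The maximum modulus of `f` on the circle of radius `r`. -/
noncomputable def maxMod (f : ℂ → ℂ) (r : ℝ) : ℝ :=
  sSup ((fun z => ‖f z‖) '' {z : ℂ | ‖z‖ = r})

/-- The minimum modulus of `f` on the circle of radius `r`. -/
noncomputable def minMod (f : ℂ → ℂ) (r : ℝ) : ℝ :=
  sInf ((fun z => ‖f z‖) '' {z : ℂ | ‖z‖ = r})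

/-- `f` is a transcendental entire function: entire and not a polynomial. -/
def TranscendentalEntire (f : ℂ → ℂ) : Prop :=
  Differentiable ℂ f ∧ ¬ ∃ p : Polynomial ℂ, ∀ z, f z = p.eval z

/-- `μ_ε(r) = M(r)^ε`. -/
noncomputable def muEps (f : ℂ → ℂ) (ε : ℝ) (r : ℝ) : ℝ := (maxMod f r) ^ ε

/-- The fast escaping set `A(f)`. -/
def fastEscaping (f : ℂ → ℂ) : Set ℂ :=
  {z : ℂ | ∀ R : ℝ, 0 < R → (∀ r ≥ R, r < maxMod f r) →
    ∃ ℓ : ℕ, ∀ n : ℕ, (maxMod f)^[n] R ≤ ‖f^[n + ℓ] z‖}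

/-- The set `Q_ε(f)`. -/
def Qeps (f : ℂ → ℂ) (ε : ℝ) : Set ℂ :=
  {z : ℂ | ∀ R : ℝ, 0 < R → (∀ r ≥ R, r < muEps f ε r) →
    ∃ ℓ : ℕ, ∀ n : ℕ, (muEps f ε)^[n] R ≤ ‖f^[n + ℓ] z‖}

/-- The quite fast escaping set `Q(f) = ⋃_{0<ε<1} Q_ε(f)`. -/
def Qset (f : ℂ → ℂ) : Set ℂ := ⋃ ε ∈ Ioo (0:ℝ) 1, Qeps f ε

/-- `f` is `ε`-regular. -/
def epsRegular (f : ℂ → ℂ) (ε : ℝ) : Prop :=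
  ∀ R : ℝ, 0 < R → (∀ r ≥ R, r < maxMod f r) →
    ∃ r : ℝ, 0 < r ∧ ∀ n : ℕ, (maxMod f)^[n] R ≤ (muEps f ε)^[n] r

/-- `f` is weakly regular: `ε`-regular for every `ε ∈ (0,1)`. -/
def weaklyRegular (f : ℂ → ℂ) : Prop := ∀ ε ∈ Ioo (0:ℝ) 1, epsRegular f ε

/-- `f` is log-regular (characterization from Corollary 4.3). -/
def logRegular (f : ℂ → ℂ) : Prop :=
  ∃ r₁ > (1:ℝ), ∃ k > (1:ℝ), ∃ d > (1:ℝ), ∀ r ≥ r₁,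
    (maxMod f r) ^ (k * d) ≤ maxMod f (r ^ k)


/-! Log-regularity iterated `m` times gives `M(t^{k^m}) ≥ M(t)^{(kd)^m}`; choosing `m` with
`d^m ε ≥ 1` and `K = k^m` this yields `μ_ε(t^K) ≥ M(t)^K` for large `t`. Hence the map `t ↦ t^K`
sends the `M`-orbit of `R' = max R r₁` below the `μ_ε`-orbit of `R'^K`, and the `M`-orbit of `R`
lies below that of `R'` by monotonicity of `M` (maximum modulus principle). -/

section MaxModulus

variable {f : ℂ → ℂ}

lemma maxMod_nonneg (f : ℂ → ℂ) (r : ℝ) : 0 ≤ maxMod f r :=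
  Real.sSup_nonneg <| by rintro _ ⟨z, -, rfl⟩; exact norm_nonneg _

lemma norm_le_maxMod (hf : Differentiable ℂ f) (z : ℂ) : ‖f z‖ ≤ maxMod f ‖z‖ := by
  refine le_csSup ?_ ⟨z, rfl, rfl⟩
  have hsphere : {w : ℂ | ‖w‖ = ‖z‖} = Metric.sphere 0 ‖z‖ := by ext; simp
  rw [hsphere]
  exact ((isCompact_sphere _ _).image (continuous_norm.comp hf.continuous)).bddAbove

/-- For `r < 0` the circle is empty and `maxMod f r = sSup ∅ = 0`, so monotonicity holds on all
of `ℝ`; for `0 ≤ r ≤ s` it is the maximum modulus principle on the disc of radius `s`. -/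
lemma maxMod_monotone (hf : Differentiable ℂ f) : Monotone (maxMod f) := by
  intro r s hrs
  rcases hrs.eq_or_lt with rfl | hlt
  · exact le_rfl
  rcases lt_or_ge r 0 with hr | hr
  · have hempty : {z : ℂ | ‖z‖ = r} = ∅ := by
      ext z; simpa using (hr.trans_le (norm_nonneg z)).ne'
    simp only [maxMod, hempty, image_empty, Real.sSup_empty]
    exact maxMod_nonneg f s
  have hs : s ≠ 0 := (hr.trans_lt hlt).ne'
  refine csSup_le ⟨_, (r : ℂ), by simp [abs_of_nonneg hr], rfl⟩ ?_
  rintro _ ⟨z, hz, rfl⟩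
  refine Complex.norm_le_of_forall_mem_frontier_norm_le Metric.isBounded_ball hf.diffContOnCl
    (fun w hw => ?_) (by rw [closure_ball 0 hs, mem_closedBall_zero_iff, hz]; exact hlt.le)
  rw [frontier_ball 0 hs, mem_sphere_zero_iff_norm] at hw
  simpa [hw] using norm_le_maxMod hf w

lemma muEps_monotone (hf : Differentiable ℂ f) {ε : ℝ} (hε : 0 ≤ ε) : Monotone (muEps f ε) :=
  fun _ _ hrs => Real.rpow_le_rpow (maxMod_nonneg f _) (maxMod_monotone hf hrs) hε

end MaxModulus

lemma rpow_pow_le_of_rpow_le {g : ℝ → ℝ} (hg : ∀ r, 0 ≤ g r) {r₁ k c : ℝ} (hr₁ : 1 ≤ r₁)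
    (hk : 1 ≤ k) (hc : 0 ≤ c) (H : ∀ r ≥ r₁, g r ^ c ≤ g (r ^ k)) {r : ℝ} (hr : r₁ ≤ r) :
    ∀ m : ℕ, g r ^ (c ^ m) ≤ g (r ^ (k ^ m))
  | 0 => by simp
  | m + 1 => calc
      g r ^ (c ^ (m + 1)) = (g r ^ (c ^ m)) ^ c := by rw [← Real.rpow_mul (hg r), pow_succ]
      _ ≤ g (r ^ (k ^ m)) ^ c :=
        Real.rpow_le_rpow (Real.rpow_nonneg (hg r) _)
          (rpow_pow_le_of_rpow_le hg hr₁ hk hc H hr m) hc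
      _ ≤ g ((r ^ (k ^ m)) ^ k) :=
        H _ (hr.trans (Real.self_le_rpow_of_one_le (hr₁.trans hr) (one_le_pow₀ hk)))
      _ = g (r ^ (k ^ (m + 1))) := by rw [← Real.rpow_mul (by linarith), pow_succ]

/-- Take `K = k^m` with `d^m ε ≥ 1`: then `M(t)^K ≤ M(t)^{(kd)^m ε} ≤ M(t^K)^ε`. -/
lemma exists_maxMod_rpow_le_muEps_of_logRegular {f : ℂ → ℂ} (h : logRegular f) {ε : ℝ}
    (hε : 0 < ε) : ∃ r₁ > (1 : ℝ), ∃ K ≥ (1 : ℝ),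
      ∀ t ≥ r₁, 1 ≤ maxMod f t → maxMod f t ^ K ≤ muEps f ε (t ^ K) := by
  obtain ⟨r₁, hr₁, k, hk, d, hd, H⟩ := h
  obtain ⟨m, hm⟩ := pow_unbounded_of_one_lt ε⁻¹ hd
  have hKε : k ^ m ≤ (k * d) ^ m * ε := by
    have hdm : 1 ≤ d ^ m * ε := by
      rw [inv_lt_iff_one_lt_mul₀ hε] at hm; linarith
    rw [mul_pow, mul_assoc]
    exact le_mul_of_one_le_right (by positivity) hdm
  refine ⟨r₁, hr₁, k ^ m, one_le_pow₀ hk.le, fun t ht hMt => ?_⟩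
  have hM0 := maxMod_nonneg f t
  calc maxMod f t ^ k ^ m ≤ maxMod f t ^ ((k * d) ^ m * ε) :=
        Real.rpow_le_rpow_of_exponent_le hMt hKε
    _ = (maxMod f t ^ (k * d) ^ m) ^ ε := Real.rpow_mul hM0 _ _
    _ ≤ muEps f ε (t ^ k ^ m) := Real.rpow_le_rpow (Real.rpow_nonneg hM0 _)
        (rpow_pow_le_of_rpow_le (maxMod_nonneg f) hr₁.le hk.le (by positivity) H ht m) hε.le

lemma iterate_map_le_iterate_of_map_le {α β : Type*} [Preorder α] [Preorder β]
    {F : α → α} {G : β → β} {φ : α → β} {a : α} (hF : Monotone F) (hG : Monotone G)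
    (ha : a ≤ F a) (h : ∀ t ≥ a, φ (F t) ≤ G (φ t)) (n : ℕ) :
    φ (F^[n] a) ≤ G^[n] (φ a) :=
  hG.seq_le_seq (x := fun j => φ (F^[j] a)) (y := fun j => G^[j] (φ a)) n le_rfl
    (fun j _ => by
      simpa only [Function.iterate_succ_apply'] using
        h _ (hF.monotone_iterate_of_le_map ha j.zero_le))
    (fun j _ => (Function.iterate_succ_apply' _ _ _).ge)

theorem stmt_8 (f : ℂ → ℂ) (hf : TranscendentalEntire f) (h : logRegular f) :
    weaklyRegular f := by
  rintro ε ⟨hε, -⟩ R - hRM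
  obtain ⟨r₁, hr₁, K, hK, hMK⟩ := exists_maxMod_rpow_le_muEps_of_logRegular h hε
  have hM := maxMod_monotone hf.1
  set R' := max R r₁
  have hr₁R' : r₁ ≤ R' := le_max_right R r₁
  have hR'M (t : ℝ) (ht : R' ≤ t) : t < maxMod f t := hRM t (le_of_max_le_left ht)
  have hR'_le_orbit (n : ℕ) : R' ≤ (maxMod f)^[n] R' :=
    hM.monotone_iterate_of_le_map (hR'M R' le_rfl).le n.zero_le
  refine ⟨R' ^ K, by positivity, fun n => ?_⟩
  calc (maxMod f)^[n] R ≤ (maxMod f)^[n] R' := hM.iterate n (le_max_left R r₁)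
    _ ≤ ((maxMod f)^[n] R') ^ K :=
      Real.self_le_rpow_of_one_le (hr₁.le.trans (hr₁R'.trans (hR'_le_orbit n))) hK
    _ ≤ (muEps f ε)^[n] (R' ^ K) :=
      iterate_map_le_iterate_of_map_le (φ := (· ^ K)) hM (muEps_monotone hf.1 hε.le)
        (hR'M R' le_rfl).le (fun t ht => hMK t (hr₁R'.trans ht)
          (hr₁.le.trans (hr₁R'.trans (ht.trans (hR'M t ht).le)))) n
end

section
/- Let φ : ℝ → ℝ be an increasing convex function with φ(t) > 0 for all sufficiently large t, and let φ'(t) denote the right derivative of φ at t (which exists at every point since φ is convex; in Lean it may be expressed as the derivative of φ within Set.Ioi t at t). Then the following three statements are equivalent: (a) there exist t_0 > 0 and c > 0 such that φ'(t)/φ(t) ≥ (1+c)/t for all t ≥ t_0; (b) there exist t_0 > 0 and c > 0 such that for every k > 1, φ(k t) ≥ k^{1+c} φ(t) for all t ≥ t_0; (c) there exist t_1 > 0, k > 1 and d > 1 such that φ(k t) ≥ k d φ(t) for all t ≥ t_1. -/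
open Set Filter

/-!
The conditions imply each other cyclically. (a) ⇒ (b): condition (a) says that
`log φ(t) - (1 + c) log t` has nonnegative right derivative, so this function is nondecreasing,
which is (b). (b) ⇒ (c): take `k = 2` and `d = 2 ^ c`. (c) ⇒ (a): by convexity
`φ(t) - φ(t/k) ≤ φ'(t) (t - t/k)`, and (c) gives `φ(t/k) ≤ φ(t)/(kd)`; together
`t φ'(t)/φ(t) ≥ (kd - 1)/(d(k - 1)) > 1`.
-/

open Real

theorem monotoneOn_Ici_of_hasDerivWithinAt_Ici_nonneg {f f' : ℝ → ℝ} {a : ℝ}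
    (hf : ContinuousOn f (Ici a)) (hf' : ∀ x ∈ Ici a, HasDerivWithinAt f (f' x) (Ici x) x)
    (hnonneg : ∀ x ∈ Ici a, 0 ≤ f' x) : MonotoneOn f (Ici a) := by
  intro x hx y _ hxy
  have hIcc : Icc x y ⊆ Ici a := Icc_subset_Ici_iff hxy |>.2 hx
  exact image_le_of_deriv_right_le_deriv_boundary (f' := 0) continuousOn_const
    (fun _ _ => hasDerivWithinAt_const _ _ _) le_rfl (hf.mono hIcc)
    (fun z hz => hf' z (hIcc (Ico_subset_Icc_self hz)))
    (fun z hz => hnonneg z (hIcc (Ico_subset_Icc_self hz))) ⟨hxy, le_rfl⟩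

theorem ConvexOn.hasDerivWithinAt_Ici_rightDeriv {f : ℝ → ℝ} {S : Set ℝ} {x : ℝ}
    (hf : ConvexOn ℝ S f) (hx : x ∈ interior S) :
    HasDerivWithinAt f (derivWithin f (Ioi x) x) (Ici x) x :=
  hasDerivWithinAt_Ioi_iff_Ici.1 (hf.hasDerivWithinAt_rightDeriv_of_mem_interior hx)

theorem ConvexOn.slope_le_rightDeriv_of_mem_interior {f : ℝ → ℝ} {S : Set ℝ} {w x : ℝ}
    (hf : ConvexOn ℝ S f) (hw : w ∈ S) (hx : x ∈ interior S) (hwx : w < x) :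
    slope f w x ≤ derivWithin f (Ioi x) x :=
  (hf.slope_le_leftDeriv_of_mem_interior hw hx hwx).trans
    (hf.leftDeriv_le_rightDeriv_of_mem_interior hx)

theorem rpow_mul_le_of_div_le_hasDerivWithinAt {φ φ' : ℝ → ℝ} {t₀ c : ℝ} (ht₀ : 0 < t₀)
    (hcont : ContinuousOn φ (Ici t₀))
    (hderiv : ∀ t ∈ Ici t₀, HasDerivWithinAt φ (φ' t) (Ici t) t)
    (hpos : ∀ t ∈ Ici t₀, 0 < φ t) (hgrowth : ∀ t ∈ Ici t₀, (1 + c) / t ≤ φ' t / φ t)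
    {k t : ℝ} (hk : 1 ≤ k) (ht : t₀ ≤ t) : k ^ (1 + c) * φ t ≤ φ (k * t) := by
  have hne : ∀ s ∈ Ici t₀, s ≠ 0 := fun s hs => (ht₀.trans_le hs).ne'
  have hmono : MonotoneOn (fun s => log (φ s) - (1 + c) * log s) (Ici t₀) := by
    refine monotoneOn_Ici_of_hasDerivWithinAt_Ici_nonneg
      ((hcont.log fun s hs => (hpos s hs).ne').sub
        (continuousOn_const.mul (continuousOn_log.mono hne)))
      (fun s hs => ((hderiv s hs).log (hpos s hs).ne').sub
        (((hasDerivAt_log (hne s hs)).const_mul (1 + c)).hasDerivWithinAt)) fun s hs => ?_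
    rw [← div_eq_mul_inv, sub_nonneg]
    exact hgrowth s hs
  have htpos : 0 < t := ht₀.trans_le ht
  have hkt : t ≤ k * t := le_mul_of_one_le_left htpos.le hk
  have hlog := hmono ht (ht.trans hkt) hkt
  simp only [log_mul (by linarith : k ≠ 0) htpos.ne'] at hlog
  rw [← log_le_log_iff (by have := hpos t ht; positivity) (hpos _ (ht.trans hkt)),
    log_mul (by positivity) (hpos t ht).ne', log_rpow (by linarith)]
  linarith

theorem ConvexOn.div_le_rightDeriv_div_of_mul_le {φ : ℝ → ℝ} {S : Set ℝ} {k d t : ℝ}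
    (hf : ConvexOn ℝ S φ) (hS : t / k ∈ S) (htS : t ∈ interior S) (hk : 1 < k)
    (hd : 0 < d) (ht : 0 < t) (hφt : 0 < φ t) (h : k * d * φ (t / k) ≤ φ t) :
    (1 + (d - 1) / (d * (k - 1))) / t ≤ derivWithin φ (Ioi t) t / φ t := by
  set D := derivWithin φ (Ioi t) t
  have hslope : φ t - φ (t / k) ≤ D * (t - t / k) := by
    have := hf.slope_le_rightDeriv_of_mem_interior hS htS (div_lt_self ht hk)
    rwa [slope_def_field, div_le_iff₀ (by linarith [div_lt_self ht hk])] at this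
  have hk1 : k - 1 ≠ 0 := by linarith
  have hscale : k * d * (t - t / k) = t * (d * (k - 1)) := by
    field_simp
  have key : (k * d - 1) * φ t ≤ D * t * (d * (k - 1)) := calc
    (k * d - 1) * φ t = k * d * (φ t - φ (t / k)) + (k * d * φ (t / k) - φ t) := by ring
    _ ≤ k * d * (D * (t - t / k)) + 0 := by gcongr; linarith
    _ = D * t * (d * (k - 1)) := by rw [add_zero, mul_left_comm, hscale, mul_assoc]
  have hc : 1 + (d - 1) / (d * (k - 1)) = (k * d - 1) / (d * (k - 1)) := by
    field_simp
    ring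
  rw [div_le_div_iff₀ ht hφt, hc, div_mul_eq_mul_div, div_le_iff₀ (by nlinarith)]
  linarith

def LogDerivBound (φ : ℝ → ℝ) : Prop :=
  ∃ t₀ > (0:ℝ), ∃ c > (0:ℝ), ∀ t ≥ t₀, (1 + c) / t ≤ derivWithin φ (Ioi t) t / φ t

def PowerGrowth (φ : ℝ → ℝ) : Prop :=
  ∃ t₀ > (0:ℝ), ∃ c > (0:ℝ), ∀ k > (1:ℝ), ∀ t ≥ t₀, k ^ (1 + c) * φ t ≤ φ (k * t)

def ScaledGrowth (φ : ℝ → ℝ) : Prop :=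
  ∃ t₁ > (0:ℝ), ∃ k > (1:ℝ), ∃ d > (1:ℝ), ∀ t ≥ t₁, k * d * φ t ≤ φ (k * t)

section Equivalence

variable {φ : ℝ → ℝ}

theorem ConvexOn.powerGrowth_of_logDerivBound (hf : ConvexOn ℝ univ φ)
    (hpos : ∃ T : ℝ, ∀ t ≥ T, 0 < φ t) (h : LogDerivBound φ) : PowerGrowth φ := by
  obtain ⟨t₀, ht₀, c, hc, hbound⟩ := h
  obtain ⟨T, hT⟩ := hpos
  have ht₀' : 0 < max t₀ T := ht₀.trans_le (le_max_left _ _)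
  refine ⟨max t₀ T, ht₀', c, hc, fun k hk t ht => ?_⟩
  exact rpow_mul_le_of_div_le_hasDerivWithinAt ht₀'
    ((hf.continuousOn isOpen_univ).mono (subset_univ _))
    (fun _ _ => hf.hasDerivWithinAt_Ici_rightDeriv (by simp))
    (fun s hs => hT s (le_of_max_le_right hs)) (fun s hs => hbound s (le_of_max_le_left hs))
    hk.le ht

theorem PowerGrowth.scaledGrowth (h : PowerGrowth φ) : ScaledGrowth φ := by
  obtain ⟨t₀, ht₀, c, hc, hgrowth⟩ := h
  refine ⟨t₀, ht₀, 2, one_lt_two, 2 ^ c, one_lt_rpow one_lt_two hc, fun t ht => ?_⟩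
  simpa [rpow_add two_pos] using hgrowth 2 one_lt_two t ht

theorem ConvexOn.logDerivBound_of_scaledGrowth (hf : ConvexOn ℝ univ φ)
    (hpos : ∃ T : ℝ, ∀ t ≥ T, 0 < φ t) (h : ScaledGrowth φ) : LogDerivBound φ := by
  obtain ⟨t₁, ht₁, k, hk, d, hd, hgrowth⟩ := h
  obtain ⟨T, hT⟩ := hpos
  refine ⟨max (k * t₁) T, (by positivity : 0 < k * t₁).trans_le (le_max_left _ _),
    (d - 1) / (d * (k - 1)), div_pos (by linarith) (by nlinarith), fun t ht => ?_⟩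
  have htk : k * t₁ ≤ t := le_of_max_le_left ht
  have htpos : 0 < t := (by positivity : 0 < k * t₁).trans_le htk
  refine hf.div_le_rightDeriv_div_of_mul_le (mem_univ _) (by simp) hk (by linarith) htpos
    (hT t (le_of_max_le_right ht)) ?_
  simpa [mul_div_cancel₀ t (by positivity : k ≠ 0)] using
    hgrowth (t / k) ((le_div_iff₀ (by linarith)).2 (by linarith))

end Equivalence

theorem stmt_9_general (φ : ℝ → ℝ) (hconv : ConvexOn ℝ univ φ)
    (hpos : ∃ T : ℝ, ∀ t ≥ T, 0 < φ t) :
    ((∃ t₀ > (0:ℝ), ∃ c > (0:ℝ), ∀ t ≥ t₀,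
        (1 + c) / t ≤ derivWithin φ (Ioi t) t / φ t) ↔
      (∃ t₀ > (0:ℝ), ∃ c > (0:ℝ), ∀ k > (1:ℝ), ∀ t ≥ t₀,
        k ^ (1 + c) * φ t ≤ φ (k * t))) ∧
    ((∃ t₀ > (0:ℝ), ∃ c > (0:ℝ), ∀ k > (1:ℝ), ∀ t ≥ t₀,
        k ^ (1 + c) * φ t ≤ φ (k * t)) ↔
      (∃ t₁ > (0:ℝ), ∃ k > (1:ℝ), ∃ d > (1:ℝ), ∀ t ≥ t₁,
        k * d * φ t ≤ φ (k * t))) := by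
  have hab := hconv.powerGrowth_of_logDerivBound hpos
  have hbc := PowerGrowth.scaledGrowth (φ := φ)
  have hca := hconv.logDerivBound_of_scaledGrowth hpos
  exact ⟨⟨hab, hca ∘ hbc⟩, ⟨hbc, hab ∘ hca⟩⟩

theorem stmt_9 (φ : ℝ → ℝ) (hconv : ConvexOn ℝ univ φ) (hmono : Monotone φ)
    (hpos : ∃ T : ℝ, ∀ t ≥ T, 0 < φ t) :
    ((∃ t₀ > (0:ℝ), ∃ c > (0:ℝ), ∀ t ≥ t₀,
        (1 + c) / t ≤ derivWithin φ (Ioi t) t / φ t) ↔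
      (∃ t₀ > (0:ℝ), ∃ c > (0:ℝ), ∀ k > (1:ℝ), ∀ t ≥ t₀,
        k ^ (1 + c) * φ t ≤ φ (k * t))) ∧
    ((∃ t₀ > (0:ℝ), ∃ c > (0:ℝ), ∀ k > (1:ℝ), ∀ t ≥ t₀,
        k ^ (1 + c) * φ t ≤ φ (k * t)) ↔
      (∃ t₁ > (0:ℝ), ∃ k > (1:ℝ), ∃ d > (1:ℝ), ∀ t ≥ t₁,
        k * d * φ t ≤ φ (k * t))) :=
  stmt_9_general φ hconv hpos
end

section
/- There exists a transcendental entire function f which is weakly regular but not log-regular, i.e. for all r_1 > 1, k > 1 and d > 1 there exists r ≥ r_1 with M(r^k) < M(r)^{kd}. -/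
open Set Filter

/-!
The example is the lacunary series `∑ exp (-shift j) * z ^ deg j` with `deg j = 2 ^ 4 ^ j`. The
shifts are chosen so that, in the variable `t = log r`, the `j`-th term dominates exactly for
`t ∈ [knot (j-1), knot j]`, where `knot j = 2 ^ (j ^ 2 + 3)`; up to a factor `j + 4` the maximum
modulus is the dominating term, so `log M (exp t) = deg j * t - shift j + O(deg j)` there.

Weak regularity: since `deg (j+1) = deg j ^ 4` and `2 * knot (j+1) ≤ knot j ^ 2`, eventually
`(log M (exp x)) ^ 2 ≤ ε * log M (exp (x ^ 2))`, i.e. `φ (M s) ≤ M (φ s) ^ ε` for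
`φ s = exp ((log s) ^ 2)`; iterating, `M^[n] R ≤ φ (M^[n] S) ≤ μ_ε^[n] (φ S)`.

Failure of log-regularity: `log M (exp t)` is almost linear on `[knot m, knot (m+1)]` and
`knot (m+1) / knot m → ∞`, so there `M (r ^ k)` is about `M r ^ k`, less than `M r ^ (k * d)`.
-/

open Real Polynomial

theorem differentiable_tsum_mul_pow {ι : Type*} {a : ι → ℂ} {n : ι → ℕ}
    (ha : ∀ r : ℝ, 0 < r → Summable fun i => ‖a i‖ * r ^ n i) :
    Differentiable ℂ fun z => ∑' i, a i * z ^ n i := by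
  intro z
  have hU : IsOpen (Metric.ball (0 : ℂ) (‖z‖ + 1)) := Metric.isOpen_ball
  refine (Complex.differentiableOn_tsum_of_summable_norm (ha (‖z‖ + 1) (by positivity))
    (fun i => (differentiableOn_const _).mul (differentiableOn_pow _)) hU
    fun i w hw => ?_).differentiableAt (hU.mem_nhds (by simp))
  rw [mem_ball_zero_iff] at hw
  rw [norm_mul, norm_pow]
  gcongr

section NonnegCoeff

variable {ι : Type*} {a : ι → ℝ} {n : ι → ℕ} {r : ℝ}

theorem norm_tsum_ofReal_mul_pow (ha : 0 ≤ a) (hr : 0 ≤ r) :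
    ‖∑' i, (a i : ℂ) * (r : ℂ) ^ n i‖ = ∑' i, a i * r ^ n i := by
  have h : ∑' i, (a i : ℂ) * (r : ℂ) ^ n i = ((∑' i, a i * r ^ n i : ℝ) : ℂ) := by
    simp [Complex.ofReal_tsum]
  rw [h, Complex.norm_real,
    norm_of_nonneg (tsum_nonneg fun i => mul_nonneg (ha i) (pow_nonneg hr _))]

theorem maxMod_tsum_ofReal_mul_pow (ha : 0 ≤ a) (hr : 0 ≤ r)
    (hs : Summable fun i => a i * r ^ n i) :
    maxMod (fun z => ∑' i, (a i : ℂ) * z ^ n i) r = ∑' i, a i * r ^ n i := by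
  have hnorm : ∀ z : ℂ, ‖z‖ = r → ∀ i, ‖(a i : ℂ) * z ^ n i‖ = a i * r ^ n i := by
    intro z hz i
    rw [norm_mul, norm_pow, hz, Complex.norm_real, norm_of_nonneg (ha i)]
  refine IsGreatest.csSup_eq
    ⟨⟨r, by simp [abs_of_nonneg hr], norm_tsum_ofReal_mul_pow ha hr⟩, ?_⟩
  rintro _ ⟨z, hz, rfl⟩
  calc ‖∑' i, (a i : ℂ) * z ^ n i‖ ≤ ∑' i, ‖(a i : ℂ) * z ^ n i‖ :=
        norm_tsum_le_tsum_norm (hs.congr fun i => (hnorm z hz i).symm)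
    _ = ∑' i, a i * r ^ n i := tsum_congr (hnorm z hz)

end NonnegCoeff

theorem not_exists_polynomial_of_pow_le_norm {f : ℂ → ℂ}
    (h : ∀ D : ℕ, ∃ c > 0, ∀ x : ℝ, 1 ≤ x → c * x ^ D ≤ ‖f x‖) :
    ¬ ∃ p : ℂ[X], ∀ z, f z = p.eval z := by
  rintro ⟨p, hp⟩
  obtain ⟨c, hc, hcf⟩ := h (p.natDegree + 1)
  have hdeg : p.degree < (X ^ (p.natDegree + 1) : ℂ[X]).degree := by
    rw [degree_X_pow]
    exact degree_le_natDegree.trans_lt (by exact_mod_cast p.natDegree.lt_succ_self)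
  have hsmall := (isLittleO_cobounded_of_degree_lt hdeg).def (half_pos hc)
  have hreal : Tendsto (fun x : ℝ => (x : ℂ)) atTop (Bornology.cobounded ℂ) := by
    rw [← tendsto_norm_atTop_iff_cobounded]
    simpa using tendsto_abs_atTop_atTop
  obtain ⟨x, hx, hx1⟩ := ((hreal.eventually hsmall).and (eventually_ge_atTop 1)).exists
  have hle := (hcf x hx1).trans_eq (congrArg norm (hp x))
  simp only [eval_pow, eval_X, norm_pow, Complex.norm_real, norm_of_nonneg
    (zero_le_one.trans hx1)] at hx
  nlinarith [pow_pos (zero_lt_one.trans_le hx1) (p.natDegree + 1)]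

theorem MonotoneOn.iterate_of_mapsTo {α : Type*} [Preorder α] {F : α → α} {s : Set α}
    (hF : MonotoneOn F s) (hs : MapsTo F s s) (n : ℕ) : MonotoneOn F^[n] s := by
  induction n with
  | zero => exact monotoneOn_id
  | succ n ih => exact ih.comp hF hs

theorem apply_iterate_le_iterate_apply {α : Type*} [Preorder α] {F G φ : α → α} {S : α}
    (hF : MapsTo F (Ici S) (Ici S)) (hφ : MapsTo φ (Ici S) (Ici S)) (hG : MonotoneOn G (Ici S))
    (h : ∀ x ∈ Ici S, φ (F x) ≤ G (φ x)) {x : α} (hx : x ∈ Ici S) (n : ℕ) :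
    φ (F^[n] x) ≤ G^[n] (φ x) := by
  induction n with
  | zero => exact le_rfl
  | succ n ih =>
    have hFn : φ (F^[n] x) ∈ Ici S := hφ (hF.iterate n hx)
    rw [Function.iterate_succ_apply', Function.iterate_succ_apply']
    exact (h _ (hF.iterate n hx)).trans (hG hFn (le_trans hFn ih) ih)

theorem self_le_exp_sq_log {x : ℝ} (hx : exp 1 ≤ x) : x ≤ exp (log x ^ 2) := by
  have hlog : 1 ≤ log x := (le_log_iff_exp_le ((exp_pos 1).trans_le hx)).mpr hx
  calc x ≤ exp (log x) := le_exp_log x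
    _ ≤ exp (log x ^ 2) := exp_le_exp.mpr (by nlinarith)

theorem epsRegular_of_eventually_sq_log_le {f : ℂ → ℂ} {ε : ℝ} (hε : 0 ≤ ε)
    (hM : MonotoneOn (maxMod f) (Ioi 0))
    (h : ∀ᶠ x in atTop, log (maxMod f (exp x)) ^ 2 ≤ ε * log (maxMod f (exp (x ^ 2)))) :
    epsRegular f ε := by
  intro R hR hRM
  obtain ⟨x₀, hx₀⟩ := (h.and (eventually_ge_atTop 1)).exists_forall_of_atTop
  set S := max R (exp x₀)
  set φ : ℝ → ℝ := fun s => exp (log s ^ 2)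
  have hRS : R ≤ S := le_max_left _ _
  have hpos : ∀ s ∈ Ici R, 0 < s := fun s hs => hR.trans_le hs
  have hMR : MapsTo (maxMod f) (Ici R) (Ici R) := fun s hs => hs.trans (hRM s hs).le
  have hMS : MapsTo (maxMod f) (Ici S) (Ici S) := fun s hs => hs.trans (hRM s (hRS.trans hs)).le
  have hlogS : ∀ s ∈ Ici S, x₀ ≤ log s := fun s hs =>
    (le_log_iff_exp_le (hpos s (hRS.trans hs))).mpr ((le_max_right _ _).trans hs)
  have hφ_ge : ∀ s ∈ Ici S, s ≤ φ s := fun s hs =>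
    self_le_exp_sq_log ((exp_le_exp.mpr (hx₀ x₀ le_rfl).2).trans ((le_max_right _ _).trans hs))
  have hφ : MapsTo φ (Ici S) (Ici S) := fun s hs => hs.trans (hφ_ge s hs)
  have hμ : MonotoneOn (muEps f ε) (Ici S) := fun s hs s' hs' hss' =>
    rpow_le_rpow (hpos _ (hMR (hRS.trans hs))).le
      (hM (hpos s (hRS.trans hs)) (hpos s' (hRS.trans hs')) hss') hε
  -- `φ` conjugates `M` below `μ_ε`: this is the eventual inequality at `x = log s`.
  have hconj : ∀ s ∈ Ici S, φ (maxMod f s) ≤ muEps f ε (φ s) := by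
    intro s hs
    have hkey := (hx₀ (log s) (hlogS s hs)).1
    rw [exp_log (hpos s (hRS.trans hs))] at hkey
    rw [muEps, rpow_def_of_pos (hpos _ (hMR (hRS.trans (hφ hs)))), mul_comm]
    exact exp_le_exp.mpr hkey
  refine ⟨φ S, exp_pos _, fun n => ?_⟩
  calc (maxMod f)^[n] R ≤ (maxMod f)^[n] S :=
        (hM.mono fun s hs => hpos s hs).iterate_of_mapsTo hMR n (mem_Ici.2 le_rfl) hRS hRS
    _ ≤ φ ((maxMod f)^[n] S) := hφ_ge _ (hMS.iterate n (mem_Ici.2 le_rfl))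
    _ ≤ (muEps f ε)^[n] (φ S) :=
        apply_iterate_le_iterate_apply hMS hφ hμ hconj (mem_Ici.2 le_rfl) n

namespace LacunaryExample

def deg (j : ℕ) : ℕ := 2 ^ 4 ^ j

def knot (j : ℕ) : ℝ := 2 ^ (j ^ 2 + 3)

/-- Chosen so that the `(j+1)`-st term overtakes the `j`-th exactly at `t = knot j`
(`logTerm_succ_sub`). -/
def shift : ℕ → ℝ
  | 0 => 0
  | j + 1 => shift j + (deg (j + 1) - deg j) * knot j

/-- The logarithm of the `j`-th term of `lacunary` at `r = exp t` (see `coeff_mul_exp_pow`). -/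
def logTerm (j : ℕ) (t : ℝ) : ℝ := deg j * t - shift j

theorem deg_succ (j : ℕ) : deg (j + 1) = deg j ^ 4 := by
  rw [deg, deg, pow_succ, pow_mul]

theorem deg_pos (j : ℕ) : 0 < deg j := Nat.two_pow_pos _

theorem deg_strictMono : StrictMono deg := fun _ _ h =>
  Nat.pow_lt_pow_right one_lt_two (Nat.pow_lt_pow_right (by norm_num) h)

theorem four_pow_lt_deg (j : ℕ) : 4 ^ j < deg j := Nat.lt_two_pow_self

theorem lt_deg (j : ℕ) : j < deg j :=
  (Nat.lt_pow_self (by norm_num : 1 < 4)).trans (four_pow_lt_deg j)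

theorem cast_deg_add_one_le (j : ℕ) : (deg j : ℝ) + 1 ≤ deg (j + 1) := by
  exact_mod_cast deg_strictMono (lt_add_one j)

theorem add_four_le_deg_succ (j : ℕ) : j + 4 ≤ deg (j + 1) := by
  have := four_pow_lt_deg (j + 1)
  have : j < 4 ^ j := Nat.lt_pow_self (by norm_num)
  rw [pow_succ] at *
  omega

theorem knot_pos (j : ℕ) : 0 < knot j := by unfold knot; positivity

theorem one_le_knot (j : ℕ) : 1 ≤ knot j := one_le_pow₀ one_le_two

theorem knot_succ (j : ℕ) : knot (j + 1) = knot j * 2 ^ (2 * j + 1) := by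
  rw [knot, knot, ← pow_add]; ring_nf

theorem knot_add_one_le (j : ℕ) : knot j + 1 ≤ knot (j + 1) := by
  have : (2 : ℝ) ≤ 2 ^ (2 * j + 1) := le_self_pow₀ one_le_two (by omega)
  rw [knot_succ]
  nlinarith [one_le_knot j]

theorem knot_strictMono : StrictMono knot :=
  strictMono_nat_of_lt_succ fun j => (lt_add_one _).trans_le (knot_add_one_le j)

theorem two_mul_knot_succ_le_sq (j : ℕ) : 2 * knot (j + 1) ≤ knot j ^ 2 := by
  rw [knot, knot, ← pow_succ', ← pow_mul]
  exact pow_le_pow_right₀ one_le_two (by nlinarith)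

theorem tendsto_knot_atTop : Tendsto knot atTop atTop :=
  (tendsto_pow_atTop_atTop_of_one_lt one_lt_two).comp
    (tendsto_atTop_mono (fun j => show j ≤ j ^ 2 + 3 by nlinarith) tendsto_id)

theorem shift_nonneg (j : ℕ) : 0 ≤ shift j := by
  induction j with
  | zero => exact le_rfl
  | succ j ih =>
    rw [shift]
    nlinarith [knot_pos j, cast_deg_add_one_le j]

theorem shift_succ_le (j : ℕ) : shift (j + 1) ≤ deg (j + 1) * knot j := by
  induction j with
  | zero => simp [shift, knot_pos]
  | succ j ih =>
    have hk : knot j ≤ knot (j + 1) := knot_strictMono.monotone j.le_succ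
    rw [shift]
    nlinarith [knot_pos j, (Nat.cast_nonneg (deg (j + 1)) : (0 : ℝ) ≤ _)]

theorem logTerm_succ_sub (j : ℕ) (t : ℝ) :
    logTerm (j + 1) t - logTerm j t = (deg (j + 1) - deg j) * (t - knot j) := by
  simp only [logTerm, shift]; ring

theorem logTerm_le_succ {j : ℕ} {t : ℝ} (ht : knot j ≤ t) :
    logTerm j t ≤ logTerm (j + 1) t := by
  nlinarith [logTerm_succ_sub j t, cast_deg_add_one_le j]

theorem logTerm_succ_le {j : ℕ} {t : ℝ} (ht : t ≤ knot j) :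
    logTerm (j + 1) t ≤ logTerm j t := by
  nlinarith [logTerm_succ_sub j t, cast_deg_add_one_le j]

theorem logTerm_succ_le_sub_one {j : ℕ} {t : ℝ} (ht : t + 1 ≤ knot j) :
    logTerm (j + 1) t ≤ logTerm j t - 1 := by
  nlinarith [logTerm_succ_sub j t, cast_deg_add_one_le j]

theorem logTerm_le_of_knot_le {i j : ℕ} {t : ℝ} (hij : i ≤ j) (ht : ∀ m < j, knot m ≤ t) :
    logTerm i t ≤ logTerm j t := by
  induction hij with
  | refl => exact le_rfl
  | step _ ih =>
    exact (ih fun m hm => ht m (by omega)).trans (logTerm_le_succ (ht _ (by omega)))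

theorem logTerm_add_le {j : ℕ} {t : ℝ} (ht : t ≤ knot j) (i : ℕ) :
    logTerm (i + (j + 1)) t ≤ logTerm j t - i := by
  induction i with
  | zero => simpa using logTerm_succ_le ht
  | succ i ih =>
    have hknot : t + 1 ≤ knot (i + (j + 1)) := by
      linarith [knot_add_one_le j, knot_strictMono.monotone (show j + 1 ≤ i + (j + 1) by omega)]
    rw [show i + 1 + (j + 1) = i + (j + 1) + 1 by ring]
    push_cast
    linarith [logTerm_succ_le_sub_one hknot]

theorem exp_logTerm_add_le {j : ℕ} {t : ℝ} (ht : t ≤ knot j) (i : ℕ) :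
    exp (logTerm (i + (j + 1)) t) ≤ exp (logTerm j t) * exp (-1) ^ i := by
  rw [← exp_nat_mul, ← exp_add]
  exact exp_le_exp.mpr (by linarith [logTerm_add_le ht i])

theorem summable_exp_logTerm (t : ℝ) : Summable fun j => exp (logTerm j t) := by
  obtain ⟨j, hj⟩ := (tendsto_knot_atTop.eventually_ge_atTop t).exists
  refine (summable_nat_add_iff (j + 1)).mp ?_
  have hgeo := summable_geometric_of_lt_one (exp_pos (-1)).le (exp_lt_one_iff.mpr (by norm_num))
  exact (hgeo.mul_left _).of_nonneg_of_le (fun _ => (exp_pos _).le) (exp_logTerm_add_le hj)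

/-- The terms before the `(j+1)`-st are smaller than it, the later ones decay geometrically. -/
theorem tsum_exp_logTerm_le {j : ℕ} {t : ℝ} (h₁ : knot j ≤ t) (h₂ : t ≤ knot (j + 1)) :
    ∑' i, exp (logTerm i t) ≤ (j + 4) * exp (logTerm (j + 1) t) := by
  rw [← (summable_exp_logTerm t).sum_add_tsum_nat_add (j + 2)]
  have hhead : ∑ i ∈ Finset.range (j + 2), exp (logTerm i t) ≤
      (j + 2) * exp (logTerm (j + 1) t) := by
    have := Finset.sum_le_card_nsmul (Finset.range (j + 2)) (fun i => exp (logTerm i t))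
      (exp (logTerm (j + 1) t)) fun i hi => exp_le_exp.mpr <| logTerm_le_of_knot_le
        (by simp at hi; omega) fun m hm => (knot_strictMono.monotone (by omega)).trans h₁
    simpa using this
  have hlt : exp (-1 : ℝ) < 1 := exp_lt_one_iff.mpr (by norm_num)
  have he : exp (-1 : ℝ) ≤ 2⁻¹ := by
    rw [exp_neg]; exact inv_anti₀ two_pos (by linarith [add_one_le_exp (1 : ℝ)])
  have htail : ∑' i, exp (logTerm (i + (j + 2)) t) ≤ 2 * exp (logTerm (j + 1) t) := by
    calc ∑' i, exp (logTerm (i + (j + 2)) t)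
        ≤ ∑' i, exp (logTerm (j + 1) t) * exp (-1) ^ i :=
          Summable.tsum_le_tsum (exp_logTerm_add_le h₂)
            ((summable_nat_add_iff _).mpr (summable_exp_logTerm t))
            ((summable_geometric_of_lt_one (exp_pos _).le hlt).mul_left _)
      _ = exp (logTerm (j + 1) t) * (1 - exp (-1))⁻¹ := by
          rw [tsum_mul_left, tsum_geometric_of_lt_one (exp_pos _).le hlt]
      _ ≤ 2 * exp (logTerm (j + 1) t) := by
          rw [mul_comm]
          gcongr
          rw [inv_le_comm₀ (by linarith) two_pos]
          linarith
  linarith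

noncomputable def coeff (j : ℕ) : ℝ := exp (-shift j)

noncomputable def lacunary (z : ℂ) : ℂ := ∑' j, (coeff j : ℂ) * z ^ deg j

theorem coeff_pos (j : ℕ) : 0 < coeff j := exp_pos _

theorem coeff_mul_exp_pow (j : ℕ) (t : ℝ) : coeff j * exp t ^ deg j = exp (logTerm j t) := by
  rw [coeff, logTerm, ← exp_nat_mul, ← exp_add]; ring_nf

theorem summable_coeff_mul_pow {r : ℝ} (hr : 0 < r) :
    Summable fun j => coeff j * r ^ deg j := by
  refine (summable_exp_logTerm (log r)).congr fun j => ?_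
  rw [← coeff_mul_exp_pow, exp_log hr]

theorem maxMod_lacunary {r : ℝ} (hr : 0 < r) : maxMod lacunary r = ∑' j, coeff j * r ^ deg j :=
  maxMod_tsum_ofReal_mul_pow (fun j => (coeff_pos j).le) hr.le (summable_coeff_mul_pow hr)

theorem maxMod_lacunary_exp (t : ℝ) : maxMod lacunary (exp t) = ∑' j, exp (logTerm j t) := by
  rw [maxMod_lacunary (exp_pos t)]
  exact tsum_congr (coeff_mul_exp_pow · t)

theorem exp_logTerm_le_maxMod (j : ℕ) (t : ℝ) :
    exp (logTerm j t) ≤ maxMod lacunary (exp t) := by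
  rw [maxMod_lacunary_exp]
  exact (summable_exp_logTerm t).le_tsum j fun i _ => (exp_pos _).le

theorem maxMod_lacunary_exp_pos (t : ℝ) : 0 < maxMod lacunary (exp t) :=
  (exp_pos _).trans_le (exp_logTerm_le_maxMod 0 t)

theorem logTerm_le_log_maxMod (j : ℕ) (t : ℝ) : logTerm j t ≤ log (maxMod lacunary (exp t)) :=
  (le_log_iff_exp_le (maxMod_lacunary_exp_pos t)).mpr (exp_logTerm_le_maxMod j t)

theorem log_maxMod_le {j : ℕ} {t : ℝ} (h₁ : knot j ≤ t) (h₂ : t ≤ knot (j + 1)) :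
    log (maxMod lacunary (exp t)) ≤ logTerm (j + 1) t + deg (j + 1) := by
  have hj : (j : ℝ) + 4 ≤ deg (j + 1) := by exact_mod_cast add_four_le_deg_succ j
  calc log (maxMod lacunary (exp t)) ≤ log ((j + 4) * exp (logTerm (j + 1) t)) := by
        refine log_le_log (maxMod_lacunary_exp_pos t) ?_
        rw [maxMod_lacunary_exp]
        exact tsum_exp_logTerm_le h₁ h₂
    _ = log (j + 4) + logTerm (j + 1) t := by
        rw [log_mul (by positivity) (exp_pos _).ne', log_exp]
    _ ≤ logTerm (j + 1) t + deg (j + 1) := by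
        linarith [log_le_self (by positivity : (0 : ℝ) ≤ j + 4)]

theorem differentiable_lacunary : Differentiable ℂ lacunary :=
  differentiable_tsum_mul_pow fun r hr => (summable_coeff_mul_pow hr).congr fun j => by
    rw [Complex.norm_real, norm_of_nonneg (coeff_pos j).le]

theorem transcendentalEntire_lacunary : TranscendentalEntire lacunary := by
  refine ⟨differentiable_lacunary, not_exists_polynomial_of_pow_le_norm fun D =>
    ⟨coeff D, coeff_pos D, fun x hx => ?_⟩⟩
  have hx0 : 0 ≤ x := zero_le_one.trans hx
  rw [lacunary, norm_tsum_ofReal_mul_pow (a := coeff) (fun j => (coeff_pos j).le) hx0]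
  calc coeff D * x ^ D ≤ coeff D * x ^ deg D :=
        mul_le_mul_of_nonneg_left (pow_le_pow_right₀ hx (lt_deg D).le) (coeff_pos D).le
    _ ≤ ∑' j, coeff j * x ^ deg j := (summable_coeff_mul_pow (by linarith)).le_tsum D
        fun j _ => mul_nonneg (coeff_pos j).le (pow_nonneg hx0 _)

theorem monotoneOn_maxMod_lacunary : MonotoneOn (maxMod lacunary) (Ioi 0) := by
  intro r hr s hs hrs
  rw [maxMod_lacunary hr, maxMod_lacunary hs]
  exact Summable.tsum_le_tsum
    (fun j => mul_le_mul_of_nonneg_left (pow_le_pow_left₀ (le_of_lt hr) hrs _) (coeff_pos j).le)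
    (summable_coeff_mul_pow hr) (summable_coeff_mul_pow hs)

theorem eventually_sq_log_maxMod_le {ε : ℝ} (hε : 0 < ε) :
    ∀ᶠ x in atTop,
      log (maxMod lacunary (exp x)) ^ 2 ≤ ε * log (maxMod lacunary (exp (x ^ 2))) := by
  obtain ⟨J, hJ⟩ := exists_nat_ge (8 / ε)
  filter_upwards [eventually_gt_atTop (knot J)] with x hx
  obtain ⟨i, hi₁, hi₂⟩ := StrictMono.exists_between_of_tendsto_atTop
    (t := fun i => knot (i + J)) (fun a b h => knot_strictMono (by omega))
    (tendsto_knot_atTop.comp (tendsto_add_atTop_nat J)) (by simpa using hx)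
  rw [show i + 1 + J = i + J + 1 by omega] at hi₂
  have hx1 : 1 ≤ x := (one_le_knot _).trans hi₁.le
  have hn1 : (1 : ℝ) ≤ deg (i + J + 1) := by exact_mod_cast deg_pos _
  have hεn : 8 ≤ ε * (deg (i + J + 1) : ℝ) ^ 2 := by
    have hJn : (J : ℝ) ≤ deg (i + J + 1) := by
      exact_mod_cast (show J ≤ i + J + 4 by omega).trans (add_four_le_deg_succ _)
    have := (div_le_iff₀' hε).mp (hJ.trans hJn)
    nlinarith
  have hupper : log (maxMod lacunary (exp x)) ≤ 2 * deg (i + J + 1) * x := by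
    have := log_maxMod_le hi₁.le hi₂
    rw [logTerm] at this
    nlinarith [shift_nonneg (i + J + 1)]
  have hnonneg : 0 ≤ log (maxMod lacunary (exp x)) :=
    (logTerm_le_log_maxMod 0 x).trans' (by simp [logTerm, deg, shift]; linarith)
  have hlower :
      (deg (i + J + 1) : ℝ) ^ 4 * x ^ 2 / 2 ≤ log (maxMod lacunary (exp (x ^ 2))) := by
    refine (logTerm_le_log_maxMod (i + J + 2) (x ^ 2)).trans' ?_
    have hdeg : (deg (i + J + 2) : ℝ) = (deg (i + J + 1) : ℝ) ^ 4 := by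
      exact_mod_cast deg_succ (i + J + 1)
    have hknot : 2 * knot (i + J + 1) ≤ x ^ 2 :=
      (two_mul_knot_succ_le_sq _).trans (pow_le_pow_left₀ (knot_pos _).le hi₁.le 2)
    have hshift := shift_succ_le (i + J + 1)
    rw [hdeg] at hshift
    rw [logTerm, hdeg]
    nlinarith [pow_pos (zero_lt_one.trans_le hn1) 4]
  calc log (maxMod lacunary (exp x)) ^ 2 ≤ (2 * deg (i + J + 1) * x) ^ 2 :=
        pow_le_pow_left₀ hnonneg hupper 2
    _ ≤ ε * ((deg (i + J + 1) : ℝ) ^ 4 * x ^ 2 / 2) := by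
        nlinarith [mul_le_mul_of_nonneg_right hεn
          (by positivity : (0 : ℝ) ≤ deg (i + J + 1) ^ 2 * x ^ 2)]
    _ ≤ ε * log (maxMod lacunary (exp (x ^ 2))) := mul_le_mul_of_nonneg_left hlower hε.le

theorem weaklyRegular_lacunary : weaklyRegular lacunary := fun _ hε =>
  epsRegular_of_eventually_sq_log_le hε.1.le monotoneOn_maxMod_lacunary
    (eventually_sq_log_maxMod_le hε.1)

/-- In `log` scale both `r = exp (knot (m+1) / k)` and `r ^ k` lie in `[knot m, knot (m+1)]`,
where `log M (exp t)` is nearly the linear function `deg (m+1) * t`. -/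
theorem log_maxMod_exp_knot_lt {k d : ℝ} {m : ℕ} (hk : 1 < k) (hd : 1 < d)
    (hm : k * d < (d - 1) * 2 ^ (2 * m + 1)) :
    log (maxMod lacunary (exp (knot (m + 1)))) <
      k * d * log (maxMod lacunary (exp (knot (m + 1) / k))) := by
  have hk0 : 0 < k := by linarith
  have hK : knot (m + 1) = knot m * 2 ^ (2 * m + 1) := knot_succ m
  have hkP : k ≤ 2 ^ (2 * m + 1) := by nlinarith
  have ht : knot m ≤ knot (m + 1) / k := by
    rw [le_div_iff₀ hk0, hK]
    exact mul_le_mul_of_nonneg_left hkP (knot_pos m).le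
  have hnT : 0 < deg (m + 1) * knot m := mul_pos (by exact_mod_cast deg_pos _) (knot_pos m)
  have key : logTerm (m + 1) (knot (m + 1)) + deg (m + 1) <
      k * d * logTerm (m + 1) (knot (m + 1) / k) := by
    have h₁ := mul_lt_mul_of_pos_right hm hnT
    have h₂ := mul_le_mul_of_nonneg_left (shift_succ_le m) (show 0 ≤ k * d - 1 by nlinarith)
    have h₃ : (deg (m + 1) : ℝ) ≤ deg (m + 1) * knot m :=
      le_mul_of_one_le_right (Nat.cast_nonneg _) (one_le_knot m)
    have e : k * d * logTerm (m + 1) (knot (m + 1) / k) =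
        d * deg (m + 1) * (knot m * 2 ^ (2 * m + 1)) - k * d * shift (m + 1) := by
      rw [logTerm, ← hK]; field_simp
    rw [e, logTerm, hK]
    linarith
  calc log (maxMod lacunary (exp (knot (m + 1))))
      ≤ logTerm (m + 1) (knot (m + 1)) + deg (m + 1) :=
        log_maxMod_le (knot_strictMono.monotone m.le_succ) le_rfl
    _ < k * d * logTerm (m + 1) (knot (m + 1) / k) := key
    _ ≤ k * d * log (maxMod lacunary (exp (knot (m + 1) / k))) :=
        mul_le_mul_of_nonneg_left (logTerm_le_log_maxMod _ _) (by positivity)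

theorem not_logRegular_lacunary : ¬ logRegular lacunary := by
  rintro ⟨r₁, -, k, hk, d, hd, h⟩
  have hk0 : 0 < k := by linarith
  have hP : Tendsto (fun m : ℕ => (d - 1) * (2 : ℝ) ^ (2 * m + 1)) atTop atTop :=
    ((tendsto_pow_atTop_atTop_of_one_lt one_lt_two).comp
      (tendsto_atTop_mono (fun m => show m ≤ 2 * m + 1 by omega) tendsto_id)).const_mul_atTop
        (by linarith)
  have hK : Tendsto (fun m : ℕ => knot (m + 1) / k) atTop atTop :=
    (tendsto_knot_atTop.comp (tendsto_add_atTop_nat 1)).atTop_div_const hk0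
  obtain ⟨m, hm, hr⟩ :=
    ((hP.eventually_gt_atTop (k * d)).and (hK.eventually_ge_atTop (log r₁))).exists
  have hle := h _ ((le_exp_log r₁).trans (exp_le_exp.mpr hr))
  rw [← exp_mul, div_mul_cancel₀ _ hk0.ne'] at hle
  have hlog := log_le_log (rpow_pos_of_pos (maxMod_lacunary_exp_pos _) _) hle
  rw [log_rpow (maxMod_lacunary_exp_pos _)] at hlog
  exact (log_maxMod_exp_knot_lt hk hd hm).not_ge hlog

end LacunaryExample

theorem stmt_17 :
    ∃ f : ℂ → ℂ, TranscendentalEntire f ∧ weaklyRegular f ∧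
      ∀ r₁ > (1:ℝ), ∀ k > (1:ℝ), ∀ d > (1:ℝ),
        ∃ r ≥ r₁, maxMod f (r ^ k) < (maxMod f r) ^ (k * d) := by
  refine ⟨LacunaryExample.lacunary, LacunaryExample.transcendentalEntire_lacunary,
    LacunaryExample.weaklyRegular_lacunary, fun r₁ hr₁ k hk d hd => ?_⟩
  by_contra! h
  exact LacunaryExample.not_logRegular_lacunary ⟨r₁, hr₁, k, hk, d, hd, h⟩
end
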